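/- Upgrading-merge of three symbol pairs yields an upgraded channel: let W be BMS with symbols y₁,y₂,y₃ having LR values 1 ≤ λ₁ < λ₂ < λ₃ < ∞. Set a₂ = W(y₂|0), b₂ = W(ȳ₂|0), α₁ = λ₁(λ₃b₂−a₂)/(λ₃−λ₁), β₁ = (λ₃b₂−a₂)/(λ₃−λ₁), α₃ = λ₃(a₂−λ₁b₂)/(λ₃−λ₁), β₃ = (a₂−λ₁b₂)/(λ₃−λ₁). Define Q' on Y \ {y₁,ȳ₁,y₂,ȳ₂,y₃,ȳ₃} ∪ {z₁,z̄₁,z₃,z̄₃} by Q'(z₁|0) = W(y₁|0)+α₁, Q'(z₁|1) = W(y₁|1)+β₁, Q'(z₃|0) = W(y₃|0)+α₃, Q'(z₃|1) = W(y₃|1)+β₃, symmetric values on conjugates, and Q' = W elsewhere. Then Q' is upgraded with respect to W. -/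

import Mathlib

/-!
The merged symbol `z₁` has the likelihood ratio `λ₁` of `y₁`, and `z₃` that of `y₃`. Since
`λ₁ < λ₂ < λ₃`, the column `(a₂, b₂) = b₂ (λ₂, 1)` of `y₂` is a nonnegative combination
`β₁ (λ₁, 1) + β₃ (λ₃, 1)`, and `(α_i, β_i) = β_i (λ_i, 1)`. So `W` is recovered from `Q'` by the
channel sending `z₁` to `y₁` with probability `W(ȳ₁|0) / (W(ȳ₁|0) + β₁)` and to `y₂` otherwise,
`z₃` likewise to `y₃` or `y₂`, the conjugate symbols to the conjugates, and every untouched symbol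
to itself.
-/

open scoped BigOperators

/-- `P : A → B → ℝ` is a channel: nonnegative entries, rows sum to 1. -/
def IsChannel {A B : Type*} [Fintype B] (P : A → B → ℝ) : Prop :=
  (∀ a b, 0 ≤ P a b) ∧ ∀ a, ∑ b, P a b = 1

/-- `Q` is degraded with respect to `W`. -/
def DegradedWrt {A B : Type*} [Fintype A] [Fintype B]
    (Q : Bool → B → ℝ) (W : Bool → A → ℝ) : Prop :=
  ∃ P : A → B → ℝ, IsChannel P ∧ ∀ x b, Q x b = ∑ a, W x a * P a b

theorem sum_smul_single_one {Y : Type*} [Fintype Y] [DecidableEq Y] (v : Y → ℝ) :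
    ∑ y, v y • Pi.single y (1 : ℝ) = v := by
  conv_rhs => rw [← Finset.univ_sum_single v]
  simp only [← Pi.single_smul', smul_eq_mul, mul_one]

theorem Fintype.sum_eq_sum_subtype_add_sum_list {Y M : Type*} [Fintype Y] [DecidableEq Y]
    [AddCommMonoid M] {p : Y → Prop} [DecidablePred p] {l : List Y} (hl : l.Nodup)
    (hp : ∀ y, p y ↔ y ∉ l) (f : Y → M) :
    ∑ y, f y = ∑ w : {y // p y}, f w + (l.map f).sum := by
  rw [← Fintype.sum_subtype_add_sum_subtype p f, ← List.sum_toFinset f hl,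
    Finset.sum_subtype (p := fun y => ¬ p y) l.toFinset (by simp [hp])]

theorem degradedWrt_iff_sum_smul {A B : Type*} [Fintype A] [Fintype B] (Q : Bool → B → ℝ)
    (W : Bool → A → ℝ) :
    DegradedWrt Q W ↔ ∃ P : A → B → ℝ, IsChannel P ∧ ∀ x, Q x = ∑ a, W x a • P a := by
  simp only [DegradedWrt, funext_iff, Finset.sum_apply, Pi.smul_apply, smul_eq_mul]

theorem isChannel_sumElim {R S B : Type*} [Fintype B] {P₁ : R → B → ℝ} {P₂ : S → B → ℝ}
    (h₁ : IsChannel P₁) (h₂ : IsChannel P₂) : IsChannel (Sum.elim P₁ P₂) :=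
  ⟨by rintro (r | s) <;> [exact h₁.1 r; exact h₂.1 s],
    by rintro (r | s) <;> [exact h₁.2 r; exact h₂.2 s]⟩

theorem isChannel_single {R B : Type*} [Fintype B] [DecidableEq B] (f : R → B) :
    IsChannel fun r => Pi.single (f r) (1 : ℝ) :=
  ⟨fun r b => by simp only [Pi.single_apply]; positivity, fun _ => by simp⟩

def splitRow {Y : Type*} [DecidableEq Y] (p : ℝ) (u v : Y) : Y → ℝ :=
  p • Pi.single u 1 + (1 - p) • Pi.single v 1

theorem splitRow_nonneg {Y : Type*} [DecidableEq Y] {p : ℝ} (hp : p ∈ Set.Icc 0 1) (u v : Y) :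
    0 ≤ splitRow p u v :=
  add_nonneg (smul_nonneg hp.1 (Pi.single_nonneg.2 zero_le_one))
    (smul_nonneg (sub_nonneg.2 hp.2) (Pi.single_nonneg.2 zero_le_one))

theorem sum_splitRow {Y : Type*} [Fintype Y] [DecidableEq Y] (p : ℝ) (u v : Y) :
    ∑ y, splitRow p u v y = 1 := by
  simp [splitRow, Finset.sum_add_distrib, ← Finset.mul_sum]

theorem div_add_mem_Icc {b β : ℝ} (hb : 0 ≤ b) (hβ : 0 ≤ β) : b / (b + β) ∈ Set.Icc 0 1 :=
  ⟨by positivity, div_le_one_of_le₀ (by linarith) (by linarith)⟩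

theorem proportional_split {a b α β l : ℝ} (ha : a = l * b) (hα : α = l * β) (h : b + β ≠ 0) :
    (a + α) * (b / (b + β)) = a ∧ (a + α) * (1 - b / (b + β)) = α := by
  subst ha hα
  exact ⟨by field_simp, by field_simp; ring⟩

theorem two_ray_decomposition {l₁ l₃ a b : ℝ} (h : l₃ - l₁ ≠ 0) :
    (l₃ * b - a) / (l₃ - l₁) + (a - l₁ * b) / (l₃ - l₁) = b ∧
      l₁ * (l₃ * b - a) / (l₃ - l₁) + l₃ * (a - l₁ * b) / (l₃ - l₁) = a :=
  ⟨by field_simp; ring, by field_simp; ring⟩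

section ThreePairMerge

variable {Y : Type*} [Fintype Y] [DecidableEq Y]

abbrev Untouched (c : Y → Y) (y₁ y₂ y₃ y : Y) : Prop :=
  y ≠ y₁ ∧ y ≠ c y₁ ∧ y ≠ y₂ ∧ y ≠ c y₂ ∧ y ≠ y₃ ∧ y ≠ c y₃

/-- The merged channel `Q'`, where `inr (false, false)`, `inr (false, true)`, `inr (true, false)`,
`inr (true, true)` stand for `z₁`, `z̄₁`, `z₃`, `z̄₃`. -/
def threePairMerge (W : Bool → Y → ℝ) (c : Y → Y) (y₁ y₂ y₃ : Y) (α₁ β₁ α₃ β₃ : ℝ) :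
    Bool → {y // Untouched c y₁ y₂ y₃ y} ⊕ (Bool × Bool) → ℝ :=
  fun x => Sum.elim (fun w => W x w) fun k =>
    match k.1, k.2 with
    | false, false => if x then W true y₁ + β₁ else W false y₁ + α₁
    | false, true => if x then W true (c y₁) + α₁ else W false (c y₁) + β₁
    | true, false => if x then W true y₃ + β₃ else W false y₃ + α₃
    | true, true => if x then W true (c y₃) + α₃ else W false (c y₃) + β₃

def threePairSplit (c : Y → Y) (y₁ y₂ y₃ : Y) (p₁ p₃ : ℝ) :
    {y // Untouched c y₁ y₂ y₃ y} ⊕ (Bool × Bool) → Y → ℝ :=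
  Sum.elim (fun w => Pi.single (w : Y) 1) fun k =>
    match k.1, k.2 with
    | false, false => splitRow p₁ y₁ y₂
    | false, true => splitRow p₁ (c y₁) (c y₂)
    | true, false => splitRow p₃ y₃ y₂
    | true, true => splitRow p₃ (c y₃) (c y₂)

theorem isChannel_threePairSplit (c : Y → Y) (y₁ y₂ y₃ : Y) {p₁ p₃ : ℝ}
    (hp₁ : p₁ ∈ Set.Icc 0 1) (hp₃ : p₃ ∈ Set.Icc 0 1) :
    IsChannel (threePairSplit c y₁ y₂ y₃ p₁ p₃) :=
  isChannel_sumElim (isChannel_single _)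
    ⟨by rintro ⟨_ | _, _ | _⟩ <;> [exact splitRow_nonneg hp₁ _ _; exact splitRow_nonneg hp₁ _ _;
        exact splitRow_nonneg hp₃ _ _; exact splitRow_nonneg hp₃ _ _],
      by rintro ⟨_ | _, _ | _⟩ <;> apply sum_splitRow⟩

theorem degradedWrt_threePairMerge (W : Bool → Y → ℝ) (c : Y → Y) (hc : Function.Involutive c)
    (hsym : ∀ y, W true y = W false (c y)) (y₁ y₂ y₃ : Y)
    (hdist : [y₁, c y₁, y₂, c y₂, y₃, c y₃].Nodup) {l₁ l₃ α₁ β₁ α₃ β₃ : ℝ}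
    (hb₁ : 0 < W false (c y₁)) (hb₃ : 0 < W false (c y₃)) (hβ₁ : 0 ≤ β₁) (hβ₃ : 0 ≤ β₃)
    (ha₁ : W false y₁ = l₁ * W false (c y₁)) (ha₃ : W false y₃ = l₃ * W false (c y₃))
    (hα₁ : α₁ = l₁ * β₁) (hα₃ : α₃ = l₃ * β₃)
    (hα : α₁ + α₃ = W false y₂) (hβ : β₁ + β₃ = W false (c y₂)) :
    DegradedWrt W (threePairMerge W c y₁ y₂ y₃ α₁ β₁ α₃ β₃) := by
  set p₁ := W false (c y₁) / (W false (c y₁) + β₁)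
  set p₃ := W false (c y₃) / (W false (c y₃) + β₃)
  have hB₁ : W false (c y₁) + β₁ ≠ 0 := by positivity
  have hB₃ : W false (c y₃) + β₃ ≠ 0 := by positivity
  obtain ⟨h₁a, h₁α⟩ := proportional_split ha₁ hα₁ hB₁
  obtain ⟨h₁b, h₁β⟩ := proportional_split (one_mul _).symm (one_mul _).symm hB₁
  obtain ⟨h₃a, h₃α⟩ := proportional_split ha₃ hα₃ hB₃
  obtain ⟨h₃b, h₃β⟩ := proportional_split (one_mul _).symm (one_mul _).symm hB₃
  rw [degradedWrt_iff_sum_smul]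
  refine ⟨threePairSplit c y₁ y₂ y₃ p₁ p₃, isChannel_threePairSplit c y₁ y₂ y₃
    (div_add_mem_Icc hb₁.le hβ₁) (div_add_mem_Icc hb₃.le hβ₃), fun x => ?_⟩
  rw [Fintype.sum_sum_type, ← sum_smul_single_one (W x),
    Fintype.sum_eq_sum_subtype_add_sum_list hdist (p := Untouched c y₁ y₂ y₃) (by simp)]
  congr 1
  simp only [threePairMerge, threePairSplit, splitRow, Sum.elim_inr, Fintype.sum_prod_type,
    Fintype.sum_bool, List.map_cons, List.map_nil, List.sum_cons, List.sum_nil]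
  cases x
  · simp only [Bool.false_eq_true, if_false]
    match_scalars <;> linarith
  · simp only [if_true, hsym, hc _]
    match_scalars <;> linarith

end ThreePairMerge

theorem upgrading_merge_three_pairs {Y : Type*} [Fintype Y] [DecidableEq Y]
    (W : Bool → Y → ℝ)
    (c : Y → Y) (hc : Function.Involutive c)
    (hsym : ∀ y, W true y = W false (c y))
    (y₁ y₂ y₃ : Y) (hdist : [y₁, c y₁, y₂, c y₂, y₃, c y₃].Nodup)
    (lam₁ lam₂ lam₃ a₂ b₂ α₁ β₁ α₃ β₃ : ℝ)
    (hb₁ : 0 < W false (c y₁)) (hb₂ : 0 < W false (c y₂)) (hb₃ : 0 < W false (c y₃))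
    (hlam₁ : lam₁ = W false y₁ / W false (c y₁))
    (hlam₂ : lam₂ = W false y₂ / W false (c y₂))
    (hlam₃ : lam₃ = W false y₃ / W false (c y₃))
    (ha₂ : a₂ = W false y₂) (hb₂' : b₂ = W false (c y₂))
    (hord₁₂ : lam₁ < lam₂) (hord₂₃ : lam₂ < lam₃)
    (hα₁ : α₁ = lam₁ * (lam₃ * b₂ - a₂) / (lam₃ - lam₁))
    (hβ₁ : β₁ = (lam₃ * b₂ - a₂) / (lam₃ - lam₁))
    (hα₃ : α₃ = lam₃ * (a₂ - lam₁ * b₂) / (lam₃ - lam₁))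
    (hβ₃ : β₃ = (a₂ - lam₁ * b₂) / (lam₃ - lam₁)) :
    DegradedWrt W
      ((fun x s =>
          Sum.elim
            (fun w : {y : Y // y ≠ y₁ ∧ y ≠ c y₁ ∧ y ≠ y₂ ∧ y ≠ c y₂ ∧ y ≠ y₃ ∧ y ≠ c y₃} =>
              W x (w : Y))
            (fun b : Bool × Bool =>
              match b with
              | (false, false) => if x then W true y₁ + β₁ else W false y₁ + α₁
              | (false, true) => if x then W true (c y₁) + α₁ else W false (c y₁) + β₁
              | (true, false) => if x then W true y₃ + β₃ else W false y₃ + α₃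
              | (true, true) => if x then W true (c y₃) + α₃ else W false (c y₃) + β₃) s) :
        Bool →
          ({y : Y // y ≠ y₁ ∧ y ≠ c y₁ ∧ y ≠ y₂ ∧ y ≠ c y₂ ∧ y ≠ y₃ ∧ y ≠ c y₃} ⊕ (Bool × Bool))
          → ℝ) := by
  have ha₂b₂ : a₂ = lam₂ * b₂ := by
    subst ha₂ hb₂'; exact ((eq_div_iff hb₂.ne').1 hlam₂).symm
  have hb₂pos : 0 < b₂ := hb₂' ▸ hb₂
  obtain ⟨hβ, hα⟩ := two_ray_decomposition (a := a₂) (b := b₂) (by linarith : lam₃ - lam₁ ≠ 0)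
  have hβ₁pos : 0 ≤ β₁ := hβ₁ ▸ div_nonneg (by nlinarith) (by linarith)
  have hβ₃pos : 0 ≤ β₃ := hβ₃ ▸ div_nonneg (by nlinarith) (by linarith)
  have hα₁β₁ : α₁ = lam₁ * β₁ := by rw [hα₁, hβ₁, mul_div_assoc]
  have hα₃β₃ : α₃ = lam₃ * β₃ := by rw [hα₃, hβ₃, mul_div_assoc]
  convert degradedWrt_threePairMerge W c hc hsym y₁ y₂ y₃ hdist hb₁ hb₃ hβ₁pos hβ₃pos
    ((eq_div_iff hb₁.ne').1 hlam₁).symm ((eq_div_iff hb₃.ne').1 hlam₃).symm hα₁β₁ hα₃β₃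
    (by rw [hα₁, hα₃, ← ha₂, hα]) (by rw [hβ₁, hβ₃, ← hb₂', hβ]) using 1
  -- `threePairMerge` matches on `k.1, k.2`, so it agrees with the `Q'` above only case by case
  funext x s
  rcases s with _ | ⟨_ | _, _ | _⟩ <;> rfl
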